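/- arXiv:math-ph/0207007 — 2 statements merged into one kernel-verified Lean document; each statement's English description precedes it below -/
import Mathlib

section
/- Fix positive integer N and integer m with 1 ≤ m ≤ N−1, and fix an integer j with 1 ≤ j ≤ N−1. Define the extension of the indicator function of the interval I_j (the j-th of the intervals (0,1−g),(1+g,3−g),…,(2N−1+g,2N), with fixed g ∈ [0,1)) by odd reflections f(−y)=−f(y), f(2N+y)=−f(2N−y), and define f_m via f_m(y) = (1/N) ∑_{n=−N}^{N−1} cos(mnπ/N) f(y+2n). Then for y ∈ I_s, f_m(y) = (2/N)·sin(mπj/N)·sin(mπs/N). -/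
open Real Finset Set Classical

/-- The intervals `I_0 = (0, 1-g)`, `I_s = (2s-1+g, 2s+1-g)` for `1 ≤ s ≤ N-1`,
and `I_N = (2N-1+g, 2N)`. -/
def Iinterval (N : ℕ) (g : ℝ) (s : ℕ) : Set ℝ :=
  if s = 0 then Set.Ioo 0 (1 - g)
  else if s = N then Set.Ioo (2 * N - 1 + g) (2 * N)
  else Set.Ioo (2 * s - 1 + g) (2 * s + 1 - g)

theorem indicator_decomposition_odd (N : ℕ) (hN : 0 < N) (m j : ℕ)
    (hm1 : 1 ≤ m) (hm2 : m ≤ N - 1) (hj1 : 1 ≤ j) (hj2 : j ≤ N - 1)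
    (g : ℝ) (hg0 : 0 ≤ g) (hg1 : g < 1) (f : ℝ → ℝ)
    (h1 : ∀ y : ℝ, f (-y) = -f y)
    (h2 : ∀ y : ℝ, f (2 * N + y) = -f (2 * N - y))
    (hind : ∀ y ∈ Set.Ioo (0 : ℝ) (2 * N),
      f y = if y ∈ Iinterval N g j then 1 else 0) :
    ∀ s ≤ N, ∀ y ∈ Iinterval N g s,
      (1 / (N : ℝ)) *
          ∑ n ∈ Finset.Icc (-(N : ℤ)) ((N : ℤ) - 1), Real.cos (m * n * π / N) * f (y + 2 * n)
        = (2 / N) * Real.sin (m * π * j / N) * Real.sin (m * π * s / N) := by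
  have hN2 : 2 ≤ N := by omega
  have hjN : j ≤ N - 1 := hj2
  have hj1' : (1 : ℤ) ≤ (j : ℤ) := by exact_mod_cast hj1
  have hj2' : (j : ℤ) ≤ (N : ℤ) - 1 := by omega
  have hNR : (2 : ℝ) ≤ (N : ℝ) := by exact_mod_cast hN2
  have hN0 : (N : ℝ) ≠ 0 := by positivity
  have hjR1 : (1 : ℝ) ≤ (j : ℝ) := by exact_mod_cast hj1
  have hjR2 : (j : ℝ) ≤ (N : ℝ) - 1 := by
    have : ((j : ℤ) : ℝ) ≤ (((N : ℤ) - 1 : ℤ) : ℝ) := by exact_mod_cast hj2'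
    push_cast at this; linarith
  -- base : interior windows
  have base : ∀ k : ℤ, 1 ≤ k → k ≤ (N : ℤ) - 1 → ∀ t : ℝ,
      2 * k - 1 + g < t → t < 2 * k + 1 - g →
      f t = if k = (j : ℤ) then 1 else 0 := by
    intro k hk1 hk2 t ht1 ht2
    have hkR1 : (1 : ℝ) ≤ (k : ℝ) := by exact_mod_cast hk1
    have hkR2 : (k : ℝ) ≤ (N : ℝ) - 1 := by
      have : ((k : ℤ) : ℝ) ≤ (((N : ℤ) - 1 : ℤ) : ℝ) := by exact_mod_cast hk2
      push_cast at this; linarith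
    have ht0 : 0 < t := by linarith
    have ht2N : t < 2 * N := by linarith
    rw [hind t ⟨ht0, ht2N⟩]
    unfold Iinterval
    rw [if_neg (by omega : j ≠ 0), if_neg (by omega : j ≠ N)]
    by_cases hkj : k = (j : ℤ)
    · rw [if_pos hkj, if_pos]
      have : (k : ℝ) = (j : ℝ) := by exact_mod_cast hkj
      constructor <;> [linarith; linarith]
    · rw [if_neg, if_neg hkj]
      intro hmem
      obtain ⟨hm1', hm2'⟩ := hmem
      rcases lt_or_gt_of_ne hkj with h | h
      · have : (k : ℝ) + 1 ≤ (j : ℝ) := by exact_mod_cast h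
        linarith
      · have : (j : ℝ) + 1 ≤ (k : ℝ) := by exact_mod_cast h
        linarith
  -- base0 : window around 0
  have base0 : ∀ t : ℝ, -1 + g < t → t < 1 - g → f t = 0 := by
    have pos : ∀ t : ℝ, 0 < t → t < 1 - g → f t = 0 := by
      intro t ht0 ht1
      rw [hind t ⟨ht0, by linarith⟩]
      unfold Iinterval
      rw [if_neg (by omega : j ≠ 0), if_neg (by omega : j ≠ N), if_neg]
      intro hmem
      have := hmem.1
      linarith
    intro t ht1 ht2
    rcases lt_trichotomy t 0 with h | h | h
    · have e : t = -(-t) := by ring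
      rw [e, h1, pos (-t) (by linarith) (by linarith), neg_zero]
    · have := h1 0
      rw [neg_zero] at this
      rw [h]; linarith
    · exact pos t h ht2
  -- baseN : window around 2N
  have baseN : ∀ t : ℝ, 2 * N - 1 + g < t → t < 2 * N + 1 - g → f t = 0 := by
    have pos : ∀ t : ℝ, 2 * N - 1 + g < t → t < 2 * N → f t = 0 := by
      intro t ht1 ht2
      rw [hind t ⟨by linarith, ht2⟩]
      unfold Iinterval
      rw [if_neg (by omega : j ≠ 0), if_neg (by omega : j ≠ N), if_neg]
      intro hmem
      have := hmem.2
      linarith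
    intro t ht1 ht2
    rcases lt_trichotomy t (2 * N) with h | h | h
    · exact pos t ht1 h
    · have := h2 0
      rw [add_zero, sub_zero] at this
      rw [h]; linarith
    · have e : t = 2 * N + (t - 2 * N) := by ring
      rw [e, h2, show 2 * (N : ℝ) - (t - 2 * N) = 4 * N - t by ring,
        pos (4 * N - t) (by linarith) (by linarith), neg_zero]
  -- key : all windows
  have key : ∀ k : ℤ, -(N : ℤ) ≤ k → k ≤ 2 * N - 1 → ∀ t : ℝ,
      2 * k - 1 + g < t → t < 2 * k + 1 - g →
      f t = if k = (j : ℤ) then 1 else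
        if k = -(j : ℤ) ∨ k = 2 * N - j then -1 else 0 := by
    intro k hk1 hk2 t ht1 ht2
    by_cases hA : 1 ≤ k ∧ k ≤ (N : ℤ) - 1
    · rw [base k hA.1 hA.2 t ht1 ht2]
      by_cases hkj : k = (j : ℤ)
      · rw [if_pos hkj, if_pos hkj]
      · rw [if_neg hkj, if_neg hkj, if_neg (by omega)]
    · by_cases hk0 : k = 0
      · subst hk0
        simp only [Int.cast_zero] at ht1 ht2
        rw [base0 t (by linarith) (by linarith), if_neg (by omega), if_neg (by omega)]
      · by_cases hkN : k = (N : ℤ)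
        · subst hkN
          push_cast at ht1 ht2
          rw [baseN t (by linarith) (by linarith), if_neg (by omega), if_neg (by omega)]
        · by_cases hB : (N : ℤ) + 1 ≤ k
          · have hBR : (N : ℝ) + 1 ≤ (k : ℝ) := by exact_mod_cast hB
            have e : t = 2 * N + (t - 2 * N) := by ring
            rw [e, h2, show 2 * (N : ℝ) - (t - 2 * N) = 4 * N - t by ring,
              base (2 * N - k) (by omega) (by omega) (4 * N - t)
                (by push_cast; linarith) (by push_cast; linarith)]
            by_cases hc : k = 2 * (N : ℤ) - j
            · rw [if_pos (by omega), if_neg (by omega), if_pos (Or.inr hc)]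
            · rw [if_neg (by omega), if_neg (by omega), if_neg (by omega)]; norm_num
          · -- -N ≤ k ≤ -1
            have hkneg : -(N : ℤ) ≤ k ∧ k ≤ -1 := by omega
            have e : t = -(-t) := by ring
            rw [e, h1]
            by_cases hkN' : k = -(N : ℤ)
            · subst hkN'
              push_cast at ht1 ht2
              rw [baseN (-t) (by linarith) (by linarith), if_neg (by omega),
                if_neg (by omega)]
              norm_num
            · rw [base (-k) (by omega) (by omega) (-t)
                (by push_cast; linarith) (by push_cast; linarith)]
              by_cases hc : -k = (j : ℤ)
              · rw [if_pos hc, if_neg (by omega), if_pos (Or.inl (by omega))]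
              · rw [if_neg hc, if_neg (by omega), if_neg (by omega)]; norm_num
  -- main summation lemma
  intro s hs y hy
  have hs' : (s : ℤ) ≤ (N : ℤ) := by exact_mod_cast hs
  have hy' : 2 * (s : ℝ) - 1 + g < y ∧ y < 2 * s + 1 - g := by
    unfold Iinterval at hy
    by_cases h0 : s = 0
    · subst h0
      rw [if_pos rfl] at hy
      obtain ⟨a, b⟩ := hy
      push_cast
      constructor <;> linarith
    · by_cases hsN : s = N
      · subst hsN
        rw [if_neg h0, if_pos rfl] at hy
        obtain ⟨a, b⟩ := hy
        constructor <;> linarith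
      · rw [if_neg h0, if_neg hsN] at hy
        exact ⟨hy.1, hy.2⟩
  have fval : ∀ n : ℤ, n ∈ Finset.Icc (-(N : ℤ)) ((N : ℤ) - 1) →
      f (y + 2 * n) = (if (s : ℤ) + n = (j : ℤ) then 1 else
        if (s : ℤ) + n = -(j : ℤ) ∨ (s : ℤ) + n = 2 * N - j then -1 else 0) := by
    intro n hn
    rw [Finset.mem_Icc] at hn
    exact key ((s : ℤ) + n) (by omega) (by omega) (y + 2 * n)
      (by push_cast; linarith [hy'.1]) (by push_cast; linarith [hy'.2])
  have main : ∀ n₁ n₂ : ℤ, n₁ ∈ Finset.Icc (-(N : ℤ)) ((N : ℤ) - 1) →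
      n₂ ∈ Finset.Icc (-(N : ℤ)) ((N : ℤ) - 1) → n₁ ≠ n₂ →
      (∀ n ∈ Finset.Icc (-(N : ℤ)) ((N : ℤ) - 1),
        f (y + 2 * n) = (if n = n₁ then 1 else if n = n₂ then -1 else 0)) →
      ∑ n ∈ Finset.Icc (-(N : ℤ)) ((N : ℤ) - 1), Real.cos (m * n * π / N) * f (y + 2 * n)
        = Real.cos (m * n₁ * π / N) - Real.cos (m * n₂ * π / N) := by
    intro n₁ n₂ h₁ h₂ hne hf
    have step : ∀ n ∈ Finset.Icc (-(N : ℤ)) ((N : ℤ) - 1),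
        Real.cos (m * n * π / N) * f (y + 2 * n)
          = (if n = n₁ then Real.cos (m * n₁ * π / N) else 0)
            + (if n = n₂ then -Real.cos (m * n₂ * π / N) else 0) := by
      intro n hn
      rw [hf n hn]
      by_cases e1 : n = n₁
      · subst e1
        rw [if_pos rfl, if_pos rfl, if_neg hne]; ring
      · rw [if_neg e1, if_neg e1]
        by_cases e2 : n = n₂
        · subst e2
          rw [if_pos rfl, if_pos rfl]; ring
        · rw [if_neg e2, if_neg e2]; ring
    rw [Finset.sum_congr rfl step, Finset.sum_add_distrib,
      Finset.sum_ite_eq' _ n₁ (fun _ => Real.cos (m * n₁ * π / N)),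
      Finset.sum_ite_eq' _ n₂ (fun _ => -Real.cos (m * n₂ * π / N)),
      if_pos h₁, if_pos h₂]
    ring
  by_cases hcase : (j : ℤ) + s ≤ N
  · have h₁ : ((j : ℤ) - s) ∈ Finset.Icc (-(N : ℤ)) ((N : ℤ) - 1) := by
      rw [Finset.mem_Icc]; omega
    have h₂ : (-(j : ℤ) - s) ∈ Finset.Icc (-(N : ℤ)) ((N : ℤ) - 1) := by
      rw [Finset.mem_Icc]; omega
    rw [main ((j : ℤ) - s) (-(j : ℤ) - s) h₁ h₂ (by omega) ?_]
    · have e2 : (m : ℝ) * ((-(j : ℤ) - s : ℤ) : ℝ) * π / N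
          = -((m : ℝ) * ((j : ℝ) + s) * π / N) := by push_cast; ring
      rw [e2, Real.cos_neg]
      have e1 : (m : ℝ) * (((j : ℤ) - s : ℤ) : ℝ) * π / N
          = (m : ℝ) * ((j : ℝ) - s) * π / N := by push_cast; ring
      rw [e1, Real.cos_sub_cos]
      rw [show ((m : ℝ) * ((j : ℝ) - s) * π / N + (m : ℝ) * ((j : ℝ) + s) * π / N) / 2
          = (m : ℝ) * π * j / N by ring,
        show ((m : ℝ) * ((j : ℝ) - s) * π / N - (m : ℝ) * ((j : ℝ) + s) * π / N) / 2
          = -((m : ℝ) * π * s / N) by ring, Real.sin_neg]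
      ring
    · intro n hn
      rw [fval n hn]
      rw [Finset.mem_Icc] at hn
      by_cases c1 : n = (j : ℤ) - s
      · rw [if_pos c1, if_pos (show (s : ℤ) + n = j by omega)]
      · rw [if_neg c1, if_neg (show ¬((s : ℤ) + n = j) by omega)]
        by_cases c2 : n = -(j : ℤ) - s
        · rw [if_pos c2, if_pos (show (s : ℤ) + n = -(j : ℤ) ∨ (s : ℤ) + n = 2 * (N : ℤ) - j
            from Or.inl (by omega))]
        · rw [if_neg c2, if_neg (show ¬((s : ℤ) + n = -(j : ℤ) ∨ (s : ℤ) + n = 2 * (N : ℤ) - j)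
            by omega)]
  · have h₁ : ((j : ℤ) - s) ∈ Finset.Icc (-(N : ℤ)) ((N : ℤ) - 1) := by
      rw [Finset.mem_Icc]; omega
    have h₂ : (2 * (N : ℤ) - j - s) ∈ Finset.Icc (-(N : ℤ)) ((N : ℤ) - 1) := by
      rw [Finset.mem_Icc]; omega
    rw [main ((j : ℤ) - s) (2 * (N : ℤ) - j - s) h₁ h₂ (by omega) ?_]
    · have e2 : (m : ℝ) * ((2 * (N : ℤ) - j - s : ℤ) : ℝ) * π / N
          = -((m : ℝ) * ((j : ℝ) + s) * π / N - (m : ℤ) * (2 * π)) := by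
        push_cast; field_simp; ring
      rw [e2, Real.cos_neg, Real.cos_sub_int_mul_two_pi]
      have e1 : (m : ℝ) * (((j : ℤ) - s : ℤ) : ℝ) * π / N
          = (m : ℝ) * ((j : ℝ) - s) * π / N := by push_cast; ring
      rw [e1, Real.cos_sub_cos]
      rw [show ((m : ℝ) * ((j : ℝ) - s) * π / N + (m : ℝ) * ((j : ℝ) + s) * π / N) / 2
          = (m : ℝ) * π * j / N by ring,
        show ((m : ℝ) * ((j : ℝ) - s) * π / N - (m : ℝ) * ((j : ℝ) + s) * π / N) / 2
          = -((m : ℝ) * π * s / N) by ring, Real.sin_neg]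
      ring
    · intro n hn
      rw [fval n hn]
      rw [Finset.mem_Icc] at hn
      by_cases c1 : n = (j : ℤ) - s
      · rw [if_pos c1, if_pos (show (s : ℤ) + n = j by omega)]
      · rw [if_neg c1, if_neg (show ¬((s : ℤ) + n = j) by omega)]
        by_cases c2 : n = 2 * (N : ℤ) - j - s
        · rw [if_pos c2, if_pos (show (s : ℤ) + n = -(j : ℤ) ∨ (s : ℤ) + n = 2 * (N : ℤ) - j
            from Or.inr (by omega))]
        · rw [if_neg c2, if_neg (show ¬((s : ℤ) + n = -(j : ℤ) ∨ (s : ℤ) + n = 2 * (N : ℤ) - j)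
            by omega)]
end

section
/- For integers N ≥ 1 and 1 ≤ m ≤ N−1, and a fixed real g ∈ [0,1), the integral of cos²(mπy/(2N)) over y ∈ (0,2N) restricted to the union of the intervals I_0=(0,1−g), I_s=(2s−1+g, 2s+1−g) for 1 ≤ s ≤ N−1, and I_N=(2N−1+g, 2N) equals N(1−g). -/
open Real Finset intervalIntegral

lemma int_cos_sq_mul (a u v : ℝ) (ha : a ≠ 0) :
    ∫ y in u..v, Real.cos (a * y) ^ 2
      = (v - u) / 2 + (Real.sin (2*a*v) - Real.sin (2*a*u)) / (4*a) := by
  rw [integral_comp_mul_left (fun x => Real.cos x ^ 2) ha, integral_cos_sq, smul_eq_mul]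
  have h : ∀ x : ℝ, Real.cos x * Real.sin x = Real.sin (2*x) / 2 := fun x => by
    rw [Real.sin_two_mul]; ring
  rw [h, h]
  field_simp
  ring

lemma sum_cos_zero (N m : ℕ) (h1 : 0 < m) (h2 : m < N) :
    ∑ s ∈ Finset.range N, Real.cos (2*π*m*s/N) = 0 := by
  have hN' : 0 < N := lt_of_le_of_lt (Nat.zero_le m) h2
  have hN : (0:ℝ) < N := by exact_mod_cast hN'
  have hNC : (N:ℂ) ≠ 0 := by exact_mod_cast hN'.ne'
  set z : ℂ := Complex.exp ((2*π*m/N : ℝ) * Complex.I) with hz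
  have hterm : ∀ s : ℕ, Complex.exp ((2*π*m*s/N : ℝ) * Complex.I) = z ^ s := by
    intro s
    rw [hz, ← Complex.exp_nat_mul]
    congr 1
    push_cast
    ring
  have hzN : z ^ N = 1 := by
    rw [hz, ← Complex.exp_nat_mul]
    have : (N:ℂ) * (((2*π*m/N : ℝ)) * Complex.I) = (m : ℤ) * (2 * π * Complex.I) := by
      push_cast
      field_simp
    rw [this, Complex.exp_int_mul_two_pi_mul_I]
  have hz1 : z ≠ 1 := by
    rw [hz, ne_eq, Complex.exp_eq_one_iff]
    rintro ⟨n, hn⟩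
    have him := congrArg Complex.im hn
    simp [Complex.mul_im, Complex.ofReal_im, Complex.ofReal_re] at him
    have hmn : (m:ℝ) = n * N := by
      field_simp at him
      nlinarith [Real.pi_pos, him]
    have hn0 : 0 < n := by
      by_contra hle
      push_neg at hle
      have : (n:ℝ) * N ≤ 0 := mul_nonpos_of_nonpos_of_nonneg (by exact_mod_cast hle) hN.le
      have : (0:ℝ) < m := by positivity
      linarith [hmn ▸ this]
    have : (N:ℝ) ≤ (m:ℝ) := by
      have : (1:ℝ) ≤ (n:ℝ) := by exact_mod_cast hn0
      nlinarith
    have : N ≤ m := by exact_mod_cast this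
    omega
  have hsum : ∑ s ∈ Finset.range N, z ^ s = 0 := by
    rw [geom_sum_eq hz1, hzN]
    simp
  have hre : ∀ s : ℕ, Real.cos (2*π*m*s/N) = (z ^ s).re := by
    intro s
    rw [← hterm s, Complex.exp_ofReal_mul_I_re]
  calc ∑ s ∈ Finset.range N, Real.cos (2*π*m*s/N)
      = (∑ s ∈ Finset.range N, z ^ s).re := by rw [Complex.re_sum]; exact Finset.sum_congr rfl fun s _ => hre s
    _ = 0 := by rw [hsum]; rfl

theorem integral_cos_sq_over_intervals (N m : ℕ) (hN : 0 < N) (hm1 : 1 ≤ m) (hm2 : m ≤ N - 1)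
    (g : ℝ) (hg0 : 0 ≤ g) (hg1 : g < 1) :
    (∫ y in (0 : ℝ)..(1 - g), Real.cos (m * π * y / (2 * N)) ^ 2) +
      (∑ s ∈ Finset.Icc 1 (N - 1),
        ∫ y in (2 * (s : ℝ) - 1 + g)..(2 * (s : ℝ) + 1 - g), Real.cos (m * π * y / (2 * N)) ^ 2) +
      (∫ y in (2 * (N : ℝ) - 1 + g)..(2 * (N : ℝ)), Real.cos (m * π * y / (2 * N)) ^ 2)
    = N * (1 - g) := by
  have hmN : m < N := lt_of_le_of_lt hm2 (Nat.sub_lt hN one_pos)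
  have hNpos : (0:ℝ) < N := by positivity
  have hmpos : (0:ℝ) < m := by exact_mod_cast hm1
  set a : ℝ := m * π / (2 * N) with ha_def
  have ha : a ≠ 0 := by
    rw [ha_def]
    positivity
  have hrw : ∀ y : ℝ, (m:ℝ) * π * y / (2 * N) = a * y := fun y => by rw [ha_def]; ring
  simp only [hrw]
  -- c := sin of the phase
  set c : ℝ := Real.sin (2*a*(1-g)) with hc_def
  -- middle sum
  have hmid : ∀ s : ℕ, (∫ y in (2 * (s : ℝ) - 1 + g)..(2 * (s : ℝ) + 1 - g), Real.cos (a * y) ^ 2)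
      = (1 - g) + c * Real.cos (2*π*m*s/N) / (2*a) := by
    intro s
    rw [int_cos_sq_mul a _ _ ha, Real.sin_sub_sin]
    have e1 : (2*a*(2 * (s : ℝ) + 1 - g) - 2*a*(2 * (s : ℝ) - 1 + g)) / 2 = 2*a*(1-g) := by ring
    have e2 : (2*a*(2 * (s : ℝ) + 1 - g) + 2*a*(2 * (s : ℝ) - 1 + g)) / 2 = 2*π*m*s/N := by
      rw [ha_def]; field_simp; ring
    rw [e1, e2, hc_def]
    field_simp
    ring
  have hfst : (∫ y in (0:ℝ)..(1 - g), Real.cos (a * y) ^ 2) = (1 - g)/2 + c/(4*a) := by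
    rw [int_cos_sq_mul a _ _ ha]
    simp [hc_def]
  have hlst : (∫ y in (2 * (N : ℝ) - 1 + g)..(2 * (N : ℝ)), Real.cos (a * y) ^ 2)
      = (1 - g)/2 + c/(4*a) := by
    rw [int_cos_sq_mul a _ _ ha]
    have e3 : 2*a*(2 * (N:ℝ)) = (m:ℝ) * (2*π) := by rw [ha_def]; field_simp
    have e4 : 2*a*(2 * (N:ℝ) - 1 + g) = (m:ℝ) * (2*π) - 2*a*(1-g) := by
      rw [ha_def]; field_simp; ring
    rw [e3, e4]
    have s1 : Real.sin ((m:ℝ) * (2*π)) = 0 := by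
      rw [show (m:ℝ)*(2*π) = ((2*m : ℕ):ℝ)*π by push_cast; ring]
      exact Real.sin_nat_mul_pi (2*m)
    have c1 : Real.cos ((m:ℝ) * (2*π)) = 1 := Real.cos_nat_mul_two_pi m
    rw [Real.sin_sub, s1, c1, hc_def]
    ring
  rw [hfst, hlst, Finset.sum_congr rfl (fun s _ => hmid s)]
  rw [Finset.sum_add_distrib, Finset.sum_const, Nat.card_Icc]
  have hcard : (N - 1 + 1 - 1) = N - 1 := by omega
  rw [hcard]
  -- sum of cosines over Icc 1 (N-1) equals -1
  have hS : ∑ s ∈ Finset.Icc 1 (N - 1), Real.cos (2*π*m*s/N) = -1 := by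
    have h0 := sum_cos_zero N m hm1 hmN
    rw [Finset.range_eq_Ico, Finset.sum_eq_sum_Ico_succ_bot hN] at h0
    have hico : Finset.Ico 1 N = Finset.Icc 1 (N-1) := by
      rw [← Finset.Ico_add_one_right_eq_Icc]
      congr 1
      omega
    rw [hico] at h0
    norm_num at h0
    linarith
  have hsplit : ∑ s ∈ Finset.Icc 1 (N - 1), c * Real.cos (2*π*m*s/N) / (2*a)
      = c * (-1) / (2*a) := by
    rw [← Finset.sum_div, ← Finset.mul_sum, hS]
  rw [hsplit, nsmul_eq_mul]
  have hcast : ((N - 1 : ℕ) : ℝ) = (N:ℝ) - 1 := by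
    have : 1 ≤ N := hN
    push_cast [Nat.cast_sub this]
    ring
  rw [hcast]
  field_simp
  ring
end
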